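/- arXiv:2510.10652 — 4 statements merged into one kernel-verified Lean document; each statement's English description precedes it below -/
import Mathlib

section
/- Let V be a complex vector space equipped with a linear involution σ, with eigenspace decomposition V = V(1) ⊕ V(−1). Extend σ to an algebra involution of the symmetric algebra S(V). If U ⊂ V is any subspace complementary to V(−1), then the composition S(U) → S(V) → S(V)/⟨σ(a) − a : a ∈ S(V)⟩ is an algebra isomorphism. -/
/-!
Let `p : V → U` be the projection along `V(-1)`. Since `σ v - v ∈ V(-1)`, we have `p ∘ σ = p`,
so the algebra map `S(V) → S(U)` induced by `p` is `σ`-invariant and descends to the quotient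
`S(V)/⟨σ a - a⟩`; this is the inverse. Indeed `v - p v ∈ V(-1)` for every `v`, and every
`w ∈ V(-1)` lies in the ideal because `w = -(σ w - w)/2`, so `v ≡ p v` modulo the ideal.
-/

open LinearMap Submodule

variable {R V : Type*} [CommRing R] [AddCommGroup V] [Module R V]

/-- The universal property of the symmetric algebra, tested against algebras in `Type`
(Mathlib's `IsSymmetricAlgebra` is instead phrased through `SymmetricAlgebra R V`). -/
def IsUniversalCommAlgebra {S : Type*} [CommRing S] [Algebra R S] (ι : V →ₗ[R] S) : Prop :=
  ∀ (B : Type) [CommRing B] [Algebra R B] (f : V →ₗ[R] B), ∃! φ : S →ₐ[R] B, ∀ v, φ (ι v) = f v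

theorem IsUniversalCommAlgebra.algHom_ext {S : Type*} [CommRing S] [Algebra R S]
    {ι : V →ₗ[R] S} (hS : IsUniversalCommAlgebra ι) {B : Type} [CommRing B] [Algebra R B]
    {φ ψ : S →ₐ[R] B} (h : ∀ v, φ (ι v) = ψ (ι v)) : φ = ψ :=
  (hS B (ψ.toLinearMap ∘ₗ ι)).unique h fun _ => rfl

section Involution

variable {σ : V →ₗ[R] V}

theorem apply_sub_mem_ker_add_id (hσ : Function.Involutive σ) (v : V) :
    σ v - v ∈ ker (σ + LinearMap.id) := by
  simp [hσ v]

theorem apply_eq_neg_of_mem_ker_add_id {w : V} (hw : w ∈ ker (σ + LinearMap.id)) : σ w = -w :=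
  eq_neg_of_add_eq_zero_left hw

theorem projectionOnto_apply_of_involutive (hσ : Function.Involutive σ) {U : Submodule R V}
    (hU : IsCompl U (ker (σ + LinearMap.id))) (v : V) :
    U.projectionOnto _ hU (σ v) = U.projectionOnto _ hU v := by
  rw [← sub_eq_zero, ← map_sub, projectionOnto_apply_eq_zero_iff]
  exact apply_sub_mem_ker_add_id hσ v

end Involution

section Coinvariants

variable {A : Type*} [CommRing A] [Algebra R A] (σ : A →ₐ[R] A)

def coinvariantsIdeal : Ideal A :=
  Ideal.span {x | ∃ a, x = σ a - a}

theorem mem_coinvariantsIdeal_of_apply_eq_neg (h2 : IsUnit (2 : R)) {x : A} (hx : σ x = -x) :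
    x ∈ coinvariantsIdeal σ := by
  have hsub : σ x - x ∈ coinvariantsIdeal σ := Ideal.subset_span ⟨x, rfl⟩
  have hx' : x = (-((h2.unit⁻¹ : Rˣ) : R)) • (σ x - x) := by
    rw [hx, neg_smul, ← smul_neg, neg_sub, sub_neg_eq_add, ← two_smul R x, smul_smul,
      IsUnit.val_inv_mul, one_smul]
  rw [hx']
  exact Submodule.smul_of_tower_mem _ _ hsub

theorem coinvariantsIdeal_le_ker {B : Type*} [CommRing B] [Algebra R B] {φ : A →ₐ[R] B}
    (hφ : φ.comp σ = φ) : coinvariantsIdeal σ ≤ RingHom.ker φ := by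
  rw [coinvariantsIdeal, Ideal.span_le]
  rintro _ ⟨a, rfl⟩
  simp [RingHom.mem_ker, ← AlgHom.congr_fun hφ a]

theorem mk_apply_projection_eq (h2 : IsUnit (2 : R)) {τ : V →ₗ[R] V} {U : Submodule R V}
    (hU : IsCompl U (ker (τ + LinearMap.id))) {ι : V →ₗ[R] A} (hσι : ∀ v, σ (ι v) = ι (τ v))
    (v : V) :
    Ideal.Quotient.mk (coinvariantsIdeal σ) (ι (U.projection _ hU v)) =
      Ideal.Quotient.mk (coinvariantsIdeal σ) (ι v) := by
  set w := v - U.projection _ hU v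
  have hw : σ (ι w) = -ι w := by
    rw [hσι, apply_eq_neg_of_mem_ker_add_id (sub_projection_mem hU v), map_neg]
  rw [Ideal.Quotient.mk_eq_mk_iff_sub_mem, ← neg_sub, ← map_sub]
  exact neg_mem (mem_coinvariantsIdeal_of_apply_eq_neg σ h2 hw)

end Coinvariants

/-- Let `V` be a complex vector space with a linear involution `σ`,
`V(-1)` its `(-1)`-eigenspace, and `U` a subspace complementary to `V(-1)`.
The symmetric algebras `S(V)` and `S(U)` are axiomatized by their universal properties
(`S` with `ι`, resp. `SU` with `ιU`).  If `σS` is the algebra extension of `σ` to `S(V)`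
and `g : S(U) → S(V)` is induced by the inclusion `U ⊆ V`, then the composition
`S(U) → S(V) → S(V)/⟨σ(a) - a⟩` is an isomorphism (i.e. bijective). -/
theorem stmt0
    (V : Type) [AddCommGroup V] [Module ℂ V]
    (σ : V →ₗ[ℂ] V) (hσ : ∀ v, σ (σ v) = v)
    (U : Submodule ℂ V)
    (hU : IsCompl U (LinearMap.ker (σ + LinearMap.id)))
    (S : Type) [CommRing S] [Algebra ℂ S] (ι : V →ₗ[ℂ] S)
    (hS : ∀ (B : Type) [CommRing B] [Algebra ℂ B] (f : V →ₗ[ℂ] B),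
      ∃! φ : S →ₐ[ℂ] B, ∀ v, φ (ι v) = f v)
    (SU : Type) [CommRing SU] [Algebra ℂ SU] (ιU : U →ₗ[ℂ] SU)
    (hSU : ∀ (B : Type) [CommRing B] [Algebra ℂ B] (f : U →ₗ[ℂ] B),
      ∃! φ : SU →ₐ[ℂ] B, ∀ u, φ (ιU u) = f u)
    (σS : S →ₐ[ℂ] S) (hσS : ∀ v, σS (ι v) = ι (σ v))
    (g : SU →ₐ[ℂ] S) (hg : ∀ u : U, g (ιU u) = ι (u : V)) :
    Function.Bijective
      ((Ideal.Quotient.mkₐ ℂ (Ideal.span {x : S | ∃ a : S, x = σS a - a})).comp g) := by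
  set p := U.projectionOnto _ hU
  obtain ⟨φ, hφ, -⟩ := hS SU (ιU ∘ₗ p)
  have hφσ : φ.comp σS = φ := IsUniversalCommAlgebra.algHom_ext hS fun v => by
    simp [hσS, hφ, p, projectionOnto_apply_of_involutive hσ hU]
  let ψ := Ideal.Quotient.liftₐ _ φ (coinvariantsIdeal_le_ker σS hφσ)
  have hψ : ∀ a, ψ (Ideal.Quotient.mk _ a) = φ a := fun _ => rfl
  let F := (Ideal.Quotient.mkₐ ℂ (coinvariantsIdeal σS)).comp g
  refine (AlgEquiv.ofAlgHom F ψ ?_ ?_).bijective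
  · refine Ideal.Quotient.algHom_ext _ (IsUniversalCommAlgebra.algHom_ext hS fun v => ?_)
    simp only [F, AlgHom.comp_apply, AlgHom.id_apply, Ideal.Quotient.mkₐ_eq_mk, hψ, hφ,
      LinearMap.comp_apply, hg, p, coe_projectionOnto_apply]
    exact mk_apply_projection_eq σS two_ne_zero.isUnit hU hσS v
  · refine IsUniversalCommAlgebra.algHom_ext hSU fun u => ?_
    simp only [F, AlgHom.comp_apply, AlgHom.id_apply, Ideal.Quotient.mkₐ_eq_mk, hg, hψ, hφ,
      LinearMap.comp_apply, p, projectionOnto_apply_left]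
end

section
/- Let K be a group in which every element has a unique square root, and let σ be an anti-automorphism of K with σ² = id. Set K^σ = {p ∈ K : σ(p) = p} and K^ω = {k ∈ K : ω(k) = k} where ω(g) = σ(g)⁻¹ (an automorphism). Then multiplication gives a bijection K^σ × K^ω → K; explicitly, every g ∈ K decomposes uniquely as g = p·k with p ∈ K^σ and k ∈ K^ω, where p is the unique square root of g·σ(g). -/
/-! If `g = p * k` with `σ p = p` and `σ k = k⁻¹`, then `g * σ g = p * k * k⁻¹ * p = p * p`, so `p` is
forced to be the square root of `g * σ g` and `k = p⁻¹ * g`. Conversely that square root is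
`σ`-fixed by uniqueness, since `g * σ g` is, and `p⁻¹ * g` is then `ω`-fixed. -/

section AntiHom

variable {K : Type*} [Group K] {σ : K → K}

theorem map_one_of_anti (hanti : ∀ g h : K, σ (g * h) = σ h * σ g) : σ 1 = 1 := by
  simpa using hanti 1 1

theorem map_inv_of_anti (hanti : ∀ g h : K, σ (g * h) = σ h * σ g) (g : K) :
    σ g⁻¹ = (σ g)⁻¹ :=
  eq_inv_of_mul_eq_one_left <| by rw [← hanti, mul_inv_cancel, map_one_of_anti hanti]

theorem mul_self_eq_mul_anti {p k : K} (hanti : ∀ g h : K, σ (g * h) = σ h * σ g)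
    (hp : σ p = p) (hk : σ k = k⁻¹) : p * p = p * k * σ (p * k) := by
  rw [hanti, hk, hp]
  group

theorem mul_anti_fixed (hanti : ∀ g h : K, σ (g * h) = σ h * σ g)
    (hinv : ∀ g, σ (σ g) = g) (g : K) : σ (g * σ g) = g * σ g := by
  rw [hanti, hinv]

theorem anti_fixed_of_mul_self {x p : K} (hanti : ∀ g h : K, σ (g * h) = σ h * σ g)
    (hsqrt : ∀ q : K, q * q = x → q = p) (hx : σ x = x) (hp : p * p = x) : σ p = p :=
  hsqrt (σ p) (by rw [← hanti, hp, hx])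

theorem anti_inv_mul_eq_inv {g p : K} (hanti : ∀ g h : K, σ (g * h) = σ h * σ g)
    (hp : σ p = p) (hpg : p * p = g * σ g) : σ (p⁻¹ * g) = (p⁻¹ * g)⁻¹ := by
  have hσg : σ g = g⁻¹ * (p * p) := by rw [hpg]; group
  rw [hanti, map_inv_of_anti hanti, hp, hσg]
  group

end AntiHom

/-- Let `K` be a group in which every element has a unique square
root, and `σ` an involutive anti-automorphism of `K`.  With `K^σ = {p : σ p = p}` and
`K^ω = {k : σ k = k⁻¹}` (the fixed points of `ω = inv ∘ σ`), multiplication gives a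
bijection `K^σ × K^ω → K`: every `g` decomposes uniquely as `g = p·k` with `σ p = p`
and `σ k = k⁻¹`; moreover `p` is the unique square root of `g·σ(g)`. -/
theorem stmt5 (K : Type) [Group K]
    (σ : K → K) (hanti : ∀ g h : K, σ (g * h) = σ h * σ g) (hinv : ∀ g, σ (σ g) = g)
    (hsq : ∀ g : K, ∃! h : K, h * h = g) :
    (∀ g : K, ∃! pk : K × K, σ pk.1 = pk.1 ∧ σ pk.2 = pk.2⁻¹ ∧ g = pk.1 * pk.2) ∧
    (∀ g p k : K, σ p = p → σ k = k⁻¹ → g = p * k → p * p = g * σ g) := by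
  have hsquare : ∀ g p k : K, σ p = p → σ k = k⁻¹ → g = p * k → p * p = g * σ g := by
    rintro g p k hp hk rfl
    exact mul_self_eq_mul_anti hanti hp hk
  refine ⟨fun g => ?_, hsquare⟩
  obtain ⟨p, hpg, hsqrt⟩ := hsq (g * σ g)
  have hp : σ p = p := anti_fixed_of_mul_self hanti hsqrt (mul_anti_fixed hanti hinv g) hpg
  refine ⟨(p, p⁻¹ * g), ⟨hp, anti_inv_mul_eq_inv hanti hp hpg, by simp⟩, ?_⟩
  rintro ⟨q, l⟩ ⟨hq, hl, rfl⟩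
  obtain rfl : q = p := hsqrt q (hsquare _ q l hq hl rfl)
  simp
end

section
/- With K, σ, ω as above (every element of K has a unique square root), the left action of K on K^σ defined by g · p = g p σ(g) is transitive, and the stabilizer of the identity element e ∈ K^σ is exactly K^ω. Consequently the orbit map induces a bijection K / K^ω ≅ K^σ, given by gK^ω ↦ g σ(g). -/
/-- With `K`, `σ`, unique square roots as in Statement 5, the left
action `g · p = g p σ(g)` of `K` on `K^σ = {p : σ p = p}` is transitive, the stabilizer
of the identity `e ∈ K^σ` is exactly `K^ω = {k : σ k = k⁻¹}`, and the orbit map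
induces a bijection `K / K^ω ≅ K^σ`, `g K^ω ↦ g σ(g)` (surjectivity onto `K^σ` and
equality of images iff same coset). -/
theorem stmt6 (K : Type) [Group K]
    (σ : K → K) (hanti : ∀ g h : K, σ (g * h) = σ h * σ g) (hinv : ∀ g, σ (σ g) = g)
    (hsq : ∀ g : K, ∃! h : K, h * h = g) :
    -- transitivity of the action g · p = g p σ(g) on K^σ
    (∀ p q : K, σ p = p → σ q = q → ∃ g : K, g * p * σ g = q) ∧
    -- stabilizer of the identity is K^ω
    (∀ g : K, g * 1 * σ g = 1 ↔ σ g = g⁻¹) ∧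
    -- the orbit map g ↦ g σ(g) surjects onto K^σ …
    (∀ p : K, σ p = p → ∃ g : K, g * σ g = p) ∧
    -- … and identifies fibers with left K^ω-cosets
    (∀ g₁ g₂ : K, g₁ * σ g₁ = g₂ * σ g₂ ↔ σ (g₁⁻¹ * g₂) = (g₁⁻¹ * g₂)⁻¹) := by
  have hone : σ 1 = 1 := by
    have h11 : σ 1 * σ 1 = σ 1 * 1 := by rw [mul_one, ← hanti, mul_one]
    exact mul_left_cancel h11
  have hinv' : ∀ g : K, σ g⁻¹ = (σ g)⁻¹ := by
    intro g
    have h1 : σ g⁻¹ * σ g = 1 := by rw [← hanti, mul_inv_cancel, hone]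
    exact eq_inv_of_mul_eq_one_left h1
  -- σ-fixed square root of a σ-fixed element
  have hroot : ∀ p : K, σ p = p → ∃ h : K, h * h = p ∧ σ h = h := by
    intro p hp
    obtain ⟨h, hh, huniq⟩ := hsq p
    refine ⟨h, hh, huniq (σ h) ?_⟩
    show σ h * σ h = p
    rw [← hanti, hh, hp]
  constructor
  · intro p q hp hq
    obtain ⟨h, hh, hσh⟩ := hroot p hp
    obtain ⟨k, hk, hσk⟩ := hroot q hq
    refine ⟨k * h⁻¹, ?_⟩
    rw [hanti, hinv', hσh, hσk]
    calc k * h⁻¹ * p * (h⁻¹ * k) = k * (h⁻¹ * p * h⁻¹) * k := by group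
    _ = k * 1 * k := by rw [← hh]; group
    _ = q := by rw [mul_one]; exact hk
  refine ⟨fun g => ?_, fun p hp => ?_, fun g₁ g₂ => ?_⟩
  · rw [mul_one]
    constructor
    · intro h; exact eq_inv_of_mul_eq_one_right h
    · intro h; rw [h, mul_inv_cancel]
  · obtain ⟨h, hh, hσh⟩ := hroot p hp
    exact ⟨h, by rw [hσh, hh]⟩
  · rw [hanti, hinv', mul_inv_rev, inv_inv]
    constructor
    · intro h
      have : σ g₂ * (σ g₁)⁻¹ = g₂⁻¹ * g₁ := by
        have := congrArg (fun x => g₂⁻¹ * x * (σ g₁)⁻¹) h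
        simpa [mul_assoc] using this.symm
      rw [this]
    · intro h
      have : σ g₂ * (σ g₁)⁻¹ = g₂⁻¹ * g₁ := h
      have := congrArg (fun x => g₂ * x * σ g₁) this
      simpa [mul_assoc] using this.symm
end

section
/- For any partition π of N, among all symplectic (resp. orthogonal) partitions π' of N with π' ⊴ π in the dominance order, there exists a unique maximal element. (A partition is orthogonal if every even part occurs with even multiplicity, and symplectic if every odd part occurs with even multiplicity.) -/
/-- A partition of `N`, encoded as an antitone function `ℕ → ℕ` (indexing parts from 0)
vanishing from index `N` on and with total sum `N`. -/
def IsPartitionOf (N : ℕ) (π : ℕ → ℕ) : Prop :=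
  Antitone π ∧ (∀ k, N ≤ k → π k = 0) ∧ ∑ k ∈ Finset.range N, π k = N

/-- Dominance order: `Dominates N π π'` means `π ⊵ π'` (partial sums of `π` dominate). -/
def Dominates (N : ℕ) (π π' : ℕ → ℕ) : Prop :=
  ∀ j, ∑ k ∈ Finset.range j, π' k ≤ ∑ k ∈ Finset.range j, π k

/-- `ε = true`: orthogonal (every nonzero even part has even multiplicity);
`ε = false`: symplectic (every odd part has even multiplicity). -/
def IsEpsilonPartition (N : ℕ) (ε : Bool) (π : ℕ → ℕ) : Prop :=
  if ε then
    ∀ m, m ≠ 0 → Even m →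
      Even ((Finset.range N).filter (fun k => π k = m)).card
  else
    ∀ m, Odd m →
      Even ((Finset.range N).filter (fun k => π k = m)).card

namespace Stmt18

def psum (π : ℕ → ℕ) (j : ℕ) : ℕ := ∑ k ∈ Finset.range j, π k

lemma psum_succ (π : ℕ → ℕ) (j : ℕ) : psum π (j+1) = psum π j + π j :=
  Finset.sum_range_succ ..

lemma psum_zero (π : ℕ → ℕ) : psum π 0 = 0 := by simp [psum]

def dropP (t : ℕ) (π : ℕ → ℕ) (j : ℕ) : Prop :=
  (psum π j + t * j) % 2 = 1 ∧ 1 ≤ π (j - 1) ∧ ¬(π (j - 1) = π j ∧ (π j + t) % 2 = 1)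

instance (t : ℕ) (π : ℕ → ℕ) (j : ℕ) : Decidable (dropP t π j) := by
  unfold dropP; infer_instance

def dnum (t : ℕ) (π : ℕ → ℕ) (j : ℕ) : ℕ := if dropP t π j then 1 else 0

def gf (t : ℕ) (π : ℕ → ℕ) (j : ℕ) : ℕ := psum π j - dnum t π j

def coll (t : ℕ) (π : ℕ → ℕ) (k : ℕ) : ℕ := gf t π (k+1) - gf t π k

lemma dnum_le_one (t π j) : dnum t π j ≤ 1 := by unfold dnum; split <;> omega

lemma not_drop_zero (t : ℕ) (π : ℕ → ℕ) : ¬ dropP t π 0 := by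
  intro h; have := h.1; simp [psum_zero] at this

lemma drop_pos (t π j) (h : dropP t π j) : 1 ≤ j := by
  rcases Nat.eq_zero_or_pos j with rfl | h1
  · exact absurd h (not_drop_zero t π)
  · exact h1

lemma dnum_le_psum (t π j) : dnum t π j ≤ psum π j := by
  unfold dnum; split
  · rename_i h
    have hj := drop_pos t π j h
    obtain ⟨i, rfl⟩ : ∃ i, j = i + 1 := ⟨j - 1, by omega⟩
    have := h.2.1
    simp only [Nat.add_sub_cancel] at this
    rw [psum_succ]; omega
  · omega

lemma gf_le_psum (t π j) : gf t π j ≤ psum π j := Nat.sub_le ..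

lemma gf_zero (t π) : gf t π 0 = 0 := by
  simp [gf, dnum, if_neg (not_drop_zero t π), psum_zero]

lemma gf_mono_succ (t π j) : gf t π j ≤ gf t π (j+1) := by
  unfold gf
  by_cases h : dropP t π (j+1)
  · have := h.2.1
    simp only [Nat.add_sub_cancel] at this
    have h2 := dnum_le_one t π j
    have h3 : dnum t π (j+1) = 1 := if_pos h
    have := psum_succ π j
    omega
  · have h3 : dnum t π (j+1) = 0 := if_neg h
    have h2 := dnum_le_one t π j
    have := psum_succ π j
    omega

lemma gf_mono (t π) : Monotone (gf t π) := monotone_nat_of_le_succ (gf_mono_succ t π)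

lemma coll_eq (t π k) : gf t π k + coll t π k = gf t π (k+1) := by
  have := gf_mono_succ t π k
  unfold coll; omega

lemma coll_sum (t π j) : ∑ k ∈ Finset.range j, coll t π k = gf t π j := by
  induction j with
  | zero => simp [gf_zero]
  | succ j ih => rw [Finset.sum_range_succ, ih, coll_eq]

section Ctx

variable {N : ℕ} {t : ℕ} {π : ℕ → ℕ}
variable (hπa : Antitone π) (hπs : ∀ k, N ≤ k → π k = 0)
variable (hπsum : ∑ k ∈ Finset.range N, π k = N)
variable (ht : t ≤ 1) (hNt : t = 0 → Even N)

include hπs hπsum in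
lemma psum_const : ∀ j, N ≤ j → psum π j = N := by
  intro j hj
  induction j, hj using Nat.le_induction with
  | base => exact hπsum
  | succ j hj ih => rw [psum_succ, hπs j hj, ih]; omega


include hπa hπs hπsum in
lemma psum_eq_of_zero (i : ℕ) (h0 : π i = 0) : psum π i = N := by
  have hstab : ∀ j, i ≤ j → psum π j = psum π i := by
    intro j hj
    induction j, hj using Nat.le_induction with
    | base => rfl
    | succ j hj ih =>
      have : π j = 0 := Nat.le_antisymm (h0 ▸ hπa hj) (Nat.zero_le _)
      rw [psum_succ, this, ih]; omega
  rcases le_total i N with h | h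
  · rw [← hstab N h]; exact psum_const hπs hπsum N le_rfl
  · exact psum_const hπs hπsum i h

include hπa hπs hπsum ht hNt in
lemma not_drop_big : ∀ j, N ≤ j → ¬ dropP t π j := by
  intro j hj hd
  have hj1 := drop_pos t π j hd
  obtain ⟨hodd, hpos, _⟩ := hd
  rcases Nat.lt_or_ge N j with h | h
  · have : π (j - 1) = 0 := hπs _ (by omega)
    omega
  · have hjN : j = N := by omega
    subst hjN
    rw [psum_const hπs hπsum j le_rfl] at hodd
    interval_cases t
    · have := hNt rfl
      rw [Nat.even_iff] at this; omega
    · omega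

include hπa hπs hπsum ht hNt in
lemma gf_const : ∀ j, N ≤ j → gf t π j = N := by
  intro j hj
  unfold gf dnum
  rw [if_neg (not_drop_big hπa hπs hπsum ht hNt j hj), psum_const hπs hπsum j hj]
  omega

include hπa hπs hπsum ht hNt in
lemma coll_support : ∀ k, N ≤ k → coll t π k = 0 := by
  intro k hk
  unfold coll
  rw [gf_const hπa hπs hπsum ht hNt k hk, gf_const hπa hπs hπsum ht hNt (k+1) (by omega)]
  omega

include hπa hπs hπsum ht hNt in
lemma coll_sumN : ∑ k ∈ Finset.range N, coll t π k = N := by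
  rw [coll_sum, gf_const hπa hπs hπsum ht hNt N le_rfl]

include hπa hπs hπsum ht hNt in
lemma coll_anti_succ (k : ℕ) : coll t π (k+1) ≤ coll t π k := by
  have hs1 : psum π (k+1) = psum π k + π k := psum_succ π k
  have hs2 : psum π (k+2) = psum π (k+1) + π (k+1) := psum_succ π (k+1)
  have hd1 := dnum_le_one t π k
  have hd2 := dnum_le_one t π (k+1)
  have hd3 := dnum_le_one t π (k+2)
  have hp1 := dnum_le_psum t π k
  have hp2 := dnum_le_psum t π (k+1)
  have hp3 : dnum t π (k+2) ≤ psum π (k+2) := dnum_le_psum t π (k+2)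
  have hanti : π (k+1) ≤ π k := hπa (by omega)
  have hm1 : t * (k+1) = t * k + t := by ring
  have hm2 : t * (k+2) = t * (k+1) + t := by ring
  have key : dnum t π (k+1) = 1 →
      π (k+1) + 2 ≤ π k + dnum t π k + dnum t π (k+2) := by
    intro hB
    have hb : dropP t π (k+1) := by
      by_contra hc; simp [dnum, if_neg hc] at hB
    obtain ⟨hodd, hpos, hexc⟩ := hb
    simp only [Nat.add_sub_cancel] at hpos hexc
    rcases Nat.lt_or_ge (π (k+1) + 1) (π k) with hbig | hsmall
    · omega
    have hdiff : π k = π (k+1) ∨ π k = π (k+1) + 1 := by omega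
    have hexc' : π k = π (k+1) → (π (k+1) + t) % 2 = 0 := by
      intro he; by_contra hc; exact hexc ⟨he, by omega⟩
    have leftdrop : (psum π k + t * k) % 2 = 1 → 1 ≤ π k →
        ((π k + t) % 2 = 0) → dnum t π k = 1 := by
      intro hA hpk hparity
      rcases Nat.eq_zero_or_pos k with rfl | hk
      · rw [psum_zero] at hA; omega
      obtain ⟨i, rfl⟩ : ∃ i, k = i + 1 := ⟨k - 1, by omega⟩
      have hAi : π i ≥ π (i+1) := hπa (by omega)
      refine if_pos ⟨hA, ?_, ?_⟩
      · show 1 ≤ π i; omega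
      · show ¬(π i = π (i+1) ∧ (π (i+1) + t) % 2 = 1)
        rintro ⟨he3, ho3⟩; omega
    have rightdrop : ((π (k+1) + t) % 2 = 0) → 1 ≤ π (k+1) → dnum t π (k+2) = 1 := by
      intro hparity hpk1
      refine if_pos ⟨by omega, ?_, ?_⟩
      · show 1 ≤ π (k+1); omega
      · show ¬(π (k+1) = π (k+2) ∧ (π (k+2) + t) % 2 = 1)
        rintro ⟨he2, ho2⟩; omega
    rcases hdiff with heq | hone
    · -- equal parts: both neighbours drop
      have hpe : (π (k+1) + t) % 2 = 0 := hexc' heq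
      have hC : dnum t π (k+2) = 1 := rightdrop hpe (by omega)
      have hA : dnum t π k = 1 := leftdrop (by omega) (by omega) (by omega)
      omega
    · -- difference one
      rcases Nat.mod_two_eq_zero_or_one (π (k+1) + t) with hpe | hpo
      · rcases Nat.eq_zero_or_pos (π (k+1)) with hz | hpk1
        · have ht0 : t = 0 := by omega
          have hNe : psum π (k+1) = N := psum_eq_of_zero hπa hπs hπsum (k+1) hz
          have := hNt ht0
          rw [Nat.even_iff] at this
          subst ht0; omega
        · have hC : dnum t π (k+2) = 1 := rightdrop hpe hpk1
          omega
      · have hA : dnum t π k = 1 := leftdrop (by omega) (by omega) (by omega)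
        omega
  have e0 : gf t π k = psum π k - dnum t π k := rfl
  have e1 : gf t π (k+1) = psum π (k+1) - dnum t π (k+1) := rfl
  have e2 : gf t π (k+2) = psum π (k+2) - dnum t π (k+2) := rfl
  have c1 : gf t π k + coll t π k = gf t π (k+1) := coll_eq t π k
  have c2 : gf t π (k+1) + coll t π (k+1) = gf t π (k+2) := coll_eq t π (k+1)
  by_cases hB : dropP t π (k+1)
  · have hB1 : dnum t π (k+1) = 1 := if_pos hB
    have := key hB1
    omega
  · have hB0 : dnum t π (k+1) = 0 := if_neg hB
    omega

include hπa hπs hπsum ht hNt in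
lemma coll_antitone : Antitone (coll t π) :=
  antitone_nat_of_succ_le (coll_anti_succ hπa hπs hπsum ht hNt)

include hπa hπs hπsum ht hNt in
lemma bdry (i : ℕ) (hne : coll t π i ≠ coll t π (i+1)) (hpos : 1 ≤ coll t π i) :
    (gf t π (i+1) + t * (i+1)) % 2 = 0 := by
  have hs1 : psum π (i+1) = psum π i + π i := psum_succ π i
  have hs2 : psum π (i+2) = psum π (i+1) + π (i+1) := psum_succ π (i+1)
  have hm1 : t * (i+1) = t * i + t := by ring
  have hm2 : t * (i+2) = t * (i+1) + t := by ring
  have hd1 := dnum_le_one t π i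
  have hd2 := dnum_le_one t π (i+1)
  have hd3 := dnum_le_one t π (i+2)
  have hp1 := dnum_le_psum t π i
  have hp2 := dnum_le_psum t π (i+1)
  have hp3 : dnum t π (i+2) ≤ psum π (i+2) := dnum_le_psum t π (i+2)
  have e0 : gf t π i = psum π i - dnum t π i := rfl
  have e1 : gf t π (i+1) = psum π (i+1) - dnum t π (i+1) := rfl
  have e2 : gf t π (i+2) = psum π (i+2) - dnum t π (i+2) := rfl
  have c1 : gf t π i + coll t π i = gf t π (i+1) := coll_eq t π i
  have c2 : gf t π (i+1) + coll t π (i+1) = gf t π (i+2) := coll_eq t π (i+1)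
  have hanti : π (i+1) ≤ π i := hπa (by omega)
  by_cases hd : dropP t π (i+1)
  · have hD : dnum t π (i+1) = 1 := if_pos hd
    have hodd := hd.1
    have hpp : 1 ≤ π i := hd.2.1
    omega
  · have hD0 : dnum t π (i+1) = 0 := if_neg hd
    rcases Nat.mod_two_eq_zero_or_one (psum π (i+1) + t * (i+1)) with hev | hodd
    · omega
    · have hsplit : π i = 0 ∨ (π i = π (i+1) ∧ (π (i+1) + t) % 2 = 1) := by
        by_contra hc
        push_neg at hc
        obtain ⟨h1, h2⟩ := hc
        exact hd ⟨hodd, by show 1 ≤ π i; omega,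
          by show ¬(π i = π (i+1) ∧ (π (i+1) + t) % 2 = 1); rintro ⟨u, v⟩; exact h2 u v⟩
      rcases hsplit with hz | ⟨heq, hpe⟩
      · -- degenerate zero tail
        have hz1 : π (i+1) = 0 := by have := hπa (show i ≤ i + 1 by omega); omega
        have dC : dnum t π (i+2) = 0 := by
          refine if_neg ?_
          rintro ⟨_, hp, _⟩
          revert hp; show ¬ (1 ≤ π (i+1)); omega
        by_cases hA : dropP t π i
        · have hAodd := hA.1
          have hA1 : dnum t π i = 1 := if_pos hA
          have ht0 : t = 0 := by omega
          have hNe : psum π i = N := psum_eq_of_zero hπa hπs hπsum i hz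
          have := hNt ht0
          rw [Nat.even_iff] at this
          subst ht0; omega
        · have hA0 : dnum t π i = 0 := if_neg hA
          omega
      · -- exceptional run: no boundary here, contradiction
        have dA : dnum t π i = 0 := by
          refine if_neg ?_
          rintro ⟨hq, _, _⟩
          omega
        have dC : dnum t π (i+2) = 0 := by
          refine if_neg ?_
          rintro ⟨hq, _, _⟩
          omega
        omega

omit hπa hπs hπsum ht hNt in
lemma card_parity (σ : ℕ → ℕ) (j : ℕ) (hall : ∀ k, k < j → 1 ≤ σ k)
    (hodd : (psum σ j + t * j) % 2 = 1) :
    Odd (((Finset.range j).filter (fun k => (σ k + t) % 2 = 1 ∧ σ k ≠ 0)).card) := by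
  have h1 : ∑ k ∈ Finset.range j, (σ k + t) = psum σ j + t * j := by
    rw [Finset.sum_add_distrib, Finset.sum_const, Finset.card_range, psum, smul_eq_mul,
      mul_comm]
  have h2 : Odd (∑ k ∈ Finset.range j, (σ k + t)) := by
    rw [h1]; exact Nat.odd_iff.mpr hodd
  rw [Finset.odd_sum_iff_odd_card_odd] at h2
  have h3 : (Finset.range j).filter (fun k => Odd (σ k + t)) =
      (Finset.range j).filter (fun k => (σ k + t) % 2 = 1 ∧ σ k ≠ 0) := by
    apply Finset.filter_congr
    intro k hk
    rw [Finset.mem_range] at hk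
    have := hall k hk
    simp only [Nat.odd_iff]
    constructor
    · intro h; exact ⟨h, by omega⟩
    · intro h; exact h.1
  rwa [h3] at h2

omit hπa hπs hπsum ht hNt in
lemma Teven (σ : ℕ → ℕ) (hσa : Antitone σ)
    (hε : ∀ m, (m + t) % 2 = 1 → m ≠ 0 →
      Even (((Finset.range N).filter (fun k => σ k = m)).card)) :
    ∀ v, Even (((Finset.range N).filter
      (fun k => v ≤ σ k ∧ (σ k + t) % 2 = 1 ∧ σ k ≠ 0)).card) := by
  suffices H : ∀ d v, σ 0 < v + d → Even (((Finset.range N).filter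
      (fun k => v ≤ σ k ∧ (σ k + t) % 2 = 1 ∧ σ k ≠ 0)).card) by
    intro v
    exact H (σ 0 + 1) v (by omega)
  intro d
  induction d with
  | zero =>
    intro v hv
    have : (Finset.range N).filter
        (fun k => v ≤ σ k ∧ (σ k + t) % 2 = 1 ∧ σ k ≠ 0) = ∅ := by
      apply Finset.filter_eq_empty_iff.mpr
      intro k _
      rintro ⟨h1, _, _⟩
      have := hσa (Nat.zero_le k)
      omega
    rw [this]; simp
  | succ d ih =>
    intro v hv
    by_cases hv0 : σ 0 < v
    · have : (Finset.range N).filter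
          (fun k => v ≤ σ k ∧ (σ k + t) % 2 = 1 ∧ σ k ≠ 0) = ∅ := by
        apply Finset.filter_eq_empty_iff.mpr
        intro k _
        rintro ⟨h1, _, _⟩
        have := hσa (Nat.zero_le k)
        omega
      rw [this]; simp
    · have hsplit : (Finset.range N).filter
          (fun k => v ≤ σ k ∧ (σ k + t) % 2 = 1 ∧ σ k ≠ 0) =
          ((Finset.range N).filter (fun k => σ k = v ∧ (σ k + t) % 2 = 1 ∧ σ k ≠ 0)) ∪
          ((Finset.range N).filter (fun k => v + 1 ≤ σ k ∧ (σ k + t) % 2 = 1 ∧ σ k ≠ 0)) := by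
        ext k
        simp only [Finset.mem_filter, Finset.mem_union, Finset.mem_range]
        constructor
        · rintro ⟨hk, h1, h2, h3⟩
          rcases Nat.eq_or_lt_of_le h1 with he | hl
          · exact Or.inl ⟨hk, he.symm, h2, h3⟩
          · exact Or.inr ⟨hk, by omega, h2, h3⟩
        · rintro (⟨hk, h1, h2, h3⟩ | ⟨hk, h1, h2, h3⟩)
          · exact ⟨hk, by omega, h2, h3⟩
          · exact ⟨hk, by omega, h2, h3⟩
      have hdisj : Disjoint
          ((Finset.range N).filter (fun k => σ k = v ∧ (σ k + t) % 2 = 1 ∧ σ k ≠ 0))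
          ((Finset.range N).filter (fun k => v + 1 ≤ σ k ∧ (σ k + t) % 2 = 1 ∧ σ k ≠ 0)) := by
        rw [Finset.disjoint_left]
        intro k hk1 hk2
        simp only [Finset.mem_filter] at hk1 hk2
        omega
      rw [hsplit, Finset.card_union_of_disjoint hdisj]
      apply Even.add
      · by_cases hm : (v + t) % 2 = 1 ∧ v ≠ 0
        · have heq2 : (Finset.range N).filter
              (fun k => σ k = v ∧ (σ k + t) % 2 = 1 ∧ σ k ≠ 0) =
              (Finset.range N).filter (fun k => σ k = v) := by
            apply Finset.filter_congr
            intro k _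
            constructor
            · intro h; exact h.1
            · intro h
              refine ⟨h, ?_, ?_⟩ <;> rw [h] <;> [exact hm.1; exact hm.2]
          rw [heq2]
          exact hε v hm.1 hm.2
        · have : (Finset.range N).filter
              (fun k => σ k = v ∧ (σ k + t) % 2 = 1 ∧ σ k ≠ 0) = ∅ := by
            apply Finset.filter_eq_empty_iff.mpr
            intro k _
            rintro ⟨h1, h2, h3⟩
            apply hm
            rw [← h1]
            exact ⟨h2, h3⟩
          rw [this]; simp
      · exact ih (v + 1) (by omega)

omit hπa hπs hπsum ht hNt in
lemma runL (σ : ℕ → ℕ) (hσa : Antitone σ) (hσs : ∀ k, N ≤ k → σ k = 0)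
    (hε : ∀ m, (m + t) % 2 = 1 → m ≠ 0 →
      Even (((Finset.range N).filter (fun k => σ k = m)).card))
    (i : ℕ)
    (hodd : Odd (((Finset.range (i+1)).filter
      (fun k => (σ k + t) % 2 = 1 ∧ σ k ≠ 0)).card)) :
    σ i = σ (i+1) ∧ (σ (i+1) + t) % 2 = 1 ∧ σ (i+1) ≠ 0 := by
  by_contra hne
  have heqset : (Finset.range (i+1)).filter (fun k => (σ k + t) % 2 = 1 ∧ σ k ≠ 0) =
      (Finset.range N).filter
        (fun k => σ (i+1) + 1 ≤ σ k ∧ (σ k + t) % 2 = 1 ∧ σ k ≠ 0) := by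
    ext k
    simp only [Finset.mem_filter, Finset.mem_range]
    constructor
    · rintro ⟨hk, h2, h3⟩
      have hge : σ (i+1) ≤ σ k := hσa (by omega)
      have hkN : k < N := by
        by_contra hkN
        exact h3 (hσs k (by omega))
      refine ⟨hkN, ?_, h2, h3⟩
      rcases Nat.eq_or_lt_of_le hge with he | hl
      · exfalso
        have hik : σ i ≤ σ k := hσa (by omega)
        have hii : σ (i+1) ≤ σ i := hσa (by omega)
        exact hne ⟨by omega, by omega, by omega⟩
      · omega
    · rintro ⟨hk, h1, h2, h3⟩
      refine ⟨?_, h2, h3⟩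
      by_contra hge2
      have : σ k ≤ σ (i+1) := hσa (by omega)
      omega
  rw [heqset] at hodd
  have := Teven σ hσa hε (σ (i+1) + 1)
  rw [← Nat.not_odd_iff_even] at this
  exact this hodd

include hπa hπs hπsum ht hNt in
lemma Dlem (σ : ℕ → ℕ) (hσa : Antitone σ) (hσs : ∀ k, N ≤ k → σ k = 0)
    (hσε : ∀ m, (m + t) % 2 = 1 → m ≠ 0 →
      Even (((Finset.range N).filter (fun k => σ k = m)).card))
    (hdom : ∀ j, psum σ j ≤ psum π j) :
    ∀ j, psum σ j ≤ gf t π j := by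
  intro j
  by_cases hd : dropP t π j
  · have hD : dnum t π j = 1 := if_pos hd
    obtain ⟨i, rfl⟩ : ∃ i, j = i + 1 := ⟨j - 1, by have := drop_pos t π j hd; omega⟩
    obtain ⟨hodd, hpos, hexc⟩ := hd
    simp only [Nat.add_sub_cancel] at hpos hexc
    have hgf : gf t π (i+1) = psum π (i+1) - 1 := by unfold gf; rw [hD]
    by_contra hc
    push_neg at hc
    have hdi1 := hdom (i+1)
    have hpp : 1 ≤ psum π (i+1) := by rw [psum_succ]; omega
    have hs : psum σ (i+1) = psum π (i+1) := by omega
    have hsσ1 : psum σ (i+1) = psum σ i + σ i := psum_succ σ i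
    have hsπ1 : psum π (i+1) = psum π i + π i := psum_succ π i
    have hsσ2 : psum σ (i+2) = psum σ (i+1) + σ (i+1) := psum_succ σ (i+1)
    have hsπ2 : psum π (i+2) = psum π (i+1) + π (i+1) := psum_succ π (i+1)
    have hdi := hdom i
    have hdi2 := hdom (i+2)
    have hgei : π i ≤ σ i := by omega
    have hlei1 : σ (i+1) ≤ π (i+1) := by omega
    have hall : ∀ k, k < i + 1 → 1 ≤ σ k := by
      intro k hk
      have := hσa (show k ≤ i by omega)
      omega
    have hodd' : (psum σ (i+1) + t * (i+1)) % 2 = 1 := by rw [hs]; exact hodd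
    have hcard := card_parity σ (i+1) hall hodd'
    obtain ⟨h1, h2, h3⟩ := runL σ hσa hσs hσε i hcard
    have hπanti : π (i+1) ≤ π i := hπa (by omega)
    exact hexc ⟨by omega, by omega⟩
  · have hD : dnum t π j = 0 := if_neg hd
    have := hdom j
    unfold gf
    omega

omit hπa hπs hπsum ht hNt in
lemma downClosed (S : Finset ℕ) (h : ∀ a b : ℕ, a ≤ b → b ∈ S → a ∈ S) :
    S = Finset.range S.card := by
  have key : ∀ k, k ∈ S ↔ k < S.card := by
    intro k
    constructor
    · intro hk
      have hsub : Finset.range (k+1) ⊆ S := by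
        intro a ha
        rw [Finset.mem_range] at ha
        exact h a k (by omega) hk
      have := Finset.card_le_card hsub
      rw [Finset.card_range] at this
      omega
    · intro hk
      by_contra hkn
      have hsub : S ⊆ Finset.range k := by
        intro b hb
        rw [Finset.mem_range]
        by_contra hb2
        push_neg at hb2
        exact hkn (h k b hb2 hb)
      have := Finset.card_le_card hsub
      rw [Finset.card_range] at this
      omega
  ext k
  rw [Finset.mem_range]
  exact key k

include hπa hπs hπsum ht hNt in
lemma collEps (m : ℕ) (hm1 : (m + t) % 2 = 1) (hm0 : m ≠ 0) :
    Even (((Finset.range N).filter (fun k => coll t π k = m)).card) := by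
  have hca : Antitone (coll t π) := coll_antitone hπa hπs hπsum ht hNt
  set S1 : Finset ℕ := (Finset.range N).filter (fun k => m ≤ coll t π k) with hS1def
  set S2 : Finset ℕ := (Finset.range N).filter (fun k => m < coll t π k) with hS2def
  set e := S1.card with hedef
  set c := S2.card with hcdef
  have hS1 : S1 = Finset.range e := by
    apply downClosed
    intro a b hab hb
    rw [hS1def, Finset.mem_filter, Finset.mem_range] at *
    exact ⟨by omega, le_trans hb.2 (hca hab)⟩
  have hS2 : S2 = Finset.range c := by
    apply downClosed
    intro a b hab hb
    rw [hS2def, Finset.mem_filter, Finset.mem_range] at *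
    exact ⟨by omega, lt_of_lt_of_le hb.2 (hca hab)⟩
  have hmem1 : ∀ k, (k < N ∧ m ≤ coll t π k) ↔ k < e := by
    intro k
    constructor
    · intro h
      have hk : k ∈ S1 := by
        rw [hS1def, Finset.mem_filter, Finset.mem_range]; exact h
      rw [hS1] at hk
      exact Finset.mem_range.mp hk
    · intro h
      have hk : k ∈ S1 := by rw [hS1]; exact Finset.mem_range.mpr h
      rw [hS1def, Finset.mem_filter, Finset.mem_range] at hk
      exact hk
  have hmem2 : ∀ k, (k < N ∧ m < coll t π k) ↔ k < c := by
    intro k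
    constructor
    · intro h
      have hk : k ∈ S2 := by
        rw [hS2def, Finset.mem_filter, Finset.mem_range]; exact h
      rw [hS2] at hk
      exact Finset.mem_range.mp hk
    · intro h
      have hk : k ∈ S2 := by rw [hS2]; exact Finset.mem_range.mpr h
      rw [hS2def, Finset.mem_filter, Finset.mem_range] at hk
      exact hk
  have hsub : S2 ⊆ S1 := by
    rw [hS1def, hS2def]
    intro k hk
    rw [Finset.mem_filter] at *
    exact ⟨hk.1, by omega⟩
  have hce : c ≤ e := Finset.card_le_card hsub
  have hAeq : (Finset.range N).filter (fun k => coll t π k = m) = S1 \ S2 := by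
    ext k
    simp only [Finset.mem_sdiff, hS1def, hS2def, Finset.mem_filter, Finset.mem_range]
    constructor
    · rintro ⟨hk, he⟩
      exact ⟨⟨hk, by omega⟩, by rintro ⟨_, h2⟩; omega⟩
    · rintro ⟨⟨hk, h1⟩, h2⟩
      have : ¬ (m < coll t π k) := fun hlt => h2 ⟨hk, hlt⟩
      exact ⟨hk, by omega⟩
  rw [hAeq, Finset.card_sdiff_of_subset hsub, ← hedef, ← hcdef]
  by_cases hlt : c < e
  swap
  · have : e - c = 0 := by omega
    rw [this]
    exact Even.zero
  -- values on the interval are m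
  have hval : ∀ k, c ≤ k → k < e → coll t π k = m := by
    intro k h1 h2
    have ha := (hmem1 k).mpr h2
    have hb : ¬ (k < N ∧ m < coll t π k) := by
      intro hx
      have := (hmem2 k).mp hx
      omega
    have hkN : k < N := ha.1
    have : ¬ (m < coll t π k) := fun hx => hb ⟨hkN, hx⟩
    omega
  -- boundary at e
  have hEe : (gf t π e + t * e) % 2 = 0 := by
    have he1 : 1 ≤ e := by omega
    have hcolle1 : coll t π (e-1) = m := hval (e-1) (by omega) (by omega)
    have hcolle : coll t π e ≠ m := by
      have : ¬ (e < N ∧ m ≤ coll t π e) := by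
        intro hx
        have := (hmem1 e).mp hx
        omega
      by_cases heN : e < N
      · intro hx
        exact this ⟨heN, by omega⟩
      · have : coll t π e = 0 := coll_support hπa hπs hπsum ht hNt e (by omega)
        omega
    have := bdry hπa hπs hπsum ht hNt (e-1)
      (by rw [show e - 1 + 1 = e by omega]; omega)
      (by omega)
    rwa [show e - 1 + 1 = e by omega] at this
  -- boundary at c
  have hEc : (gf t π c + t * c) % 2 = 0 := by
    rcases Nat.eq_zero_or_pos c with hc0 | hc1
    · rw [hc0, gf_zero]; omega
    · have hcollc1 : m < coll t π (c-1) := ((hmem2 (c-1)).mpr (by omega)).2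
      have hcollclt : ¬ (m < coll t π c) := by
        intro hx
        by_cases hcN : c < N
        · have := (hmem2 c).mp ⟨hcN, hx⟩
          omega
        · have : coll t π c = 0 := coll_support hπa hπs hπsum ht hNt c (by omega)
          omega
      have := bdry hπa hπs hπsum ht hNt (c-1)
        (by rw [show c - 1 + 1 = c by omega]; omega)
        (by omega)
      rwa [show c - 1 + 1 = c by omega] at this
  -- telescoping sum over the interval
  have hsum : gf t π e = gf t π c + (e - c) * m := by
    have h1 : ∑ k ∈ Finset.range c, coll t π k + ∑ k ∈ Finset.Ico c e, coll t π k
        = ∑ k ∈ Finset.range e, coll t π k :=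
      Finset.sum_range_add_sum_Ico _ (by omega)
    have h2 : ∑ k ∈ Finset.Ico c e, coll t π k = ∑ _k ∈ Finset.Ico c e, m :=
      Finset.sum_congr rfl (fun k hk => by
        rw [Finset.mem_Ico] at hk
        exact hval k hk.1 hk.2)
    have h3 : ∑ _k ∈ Finset.Ico c e, m = (e - c) * m := by
      rw [Finset.sum_const, Nat.card_Ico, smul_eq_mul]
    rw [coll_sum, coll_sum] at h1
    omega
  set D := e - c with hDdef
  have he2 : e = c + D := by omega
  have hte : t * e = t * c + D * t := by rw [he2]; ring
  have hmul : D * (m + t) = D * m + D * t := by ring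
  have hDm : (D * (m + t)) % 2 = 0 := by omega
  have : Even D ∨ Even (m + t) := Nat.even_mul.mp (Nat.even_iff.mpr hDm)
  rcases this with h | h
  · exact h
  · rw [Nat.even_iff] at h
    omega

end Ctx

lemma eps_unified (N : ℕ) (ε : Bool) (σ : ℕ → ℕ) :
    IsEpsilonPartition N ε σ ↔ ∀ m, (m + (if ε then 1 else 0)) % 2 = 1 → m ≠ 0 →
      Even (((Finset.range N).filter (fun k => σ k = m)).card) := by
  cases ε
  · simp only [IsEpsilonPartition, Bool.false_eq_true, if_false]
    constructor
    · intro h m hm _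
      exact h m (Nat.odd_iff.mpr (by omega))
    · intro h m hm
      rw [Nat.odd_iff] at hm
      exact h m (by omega) (by omega)
  · simp only [IsEpsilonPartition, if_true]
    constructor
    · intro h m hm hm0
      refine h m hm0 (Nat.even_iff.mpr (by omega))
    · intro h m hm0 hme
      rw [Nat.even_iff] at hme
      exact h m (by omega) hm0

end Stmt18

/-- **Gerstenhaber collapse.** For any partition `π` of `N`, among all
orthogonal (resp. symplectic) partitions `π'` of `N` with `π' ⊴ π`, there is a unique
maximal element.  (In the symplectic case `N` must be even for such partitions to
exist.) -/
theorem stmt18 (N : ℕ) (ε : Bool) (hNε : ε = false → Even N)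
    (π : ℕ → ℕ) (hπ : IsPartitionOf N π) :
    ∃! π' : ℕ → ℕ, IsPartitionOf N π' ∧ IsEpsilonPartition N ε π' ∧
      Dominates N π π' ∧
      ∀ π'' : ℕ → ℕ, IsPartitionOf N π'' → IsEpsilonPartition N ε π'' →
        Dominates N π π'' → Dominates N π' π'' := by
  obtain ⟨hπa, hπs, hπsum⟩ := hπ
  set t : ℕ := if ε then 1 else 0 with htdef
  have ht : t ≤ 1 := by cases ε <;> simp [htdef]
  have hNt : t = 0 → Even N := by
    intro h0
    apply hNε
    cases ε
    · rfl
    · simp [htdef] at h0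
  have hpart : IsPartitionOf N (Stmt18.coll t π) :=
    ⟨Stmt18.coll_antitone hπa hπs hπsum ht hNt,
     Stmt18.coll_support hπa hπs hπsum ht hNt,
     Stmt18.coll_sumN hπa hπs hπsum ht hNt⟩
  have heps : IsEpsilonPartition N ε (Stmt18.coll t π) := by
    rw [Stmt18.eps_unified, ← htdef]
    exact fun m hm1 hm0 => Stmt18.collEps hπa hπs hπsum ht hNt m hm1 hm0
  have hdomc : Dominates N π (Stmt18.coll t π) := by
    intro j
    calc ∑ k ∈ Finset.range j, Stmt18.coll t π k = Stmt18.gf t π j :=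
          Stmt18.coll_sum t π j
      _ ≤ ∑ k ∈ Finset.range j, π k := Stmt18.gf_le_psum t π j
  have hmax : ∀ π'' : ℕ → ℕ, IsPartitionOf N π'' → IsEpsilonPartition N ε π'' →
      Dominates N π π'' → Dominates N (Stmt18.coll t π) π'' := by
    intro π'' h1 h2 h3 j
    have h2' := (Stmt18.eps_unified N ε π'').mp h2
    rw [← htdef] at h2'
    calc ∑ k ∈ Finset.range j, π'' k
        ≤ Stmt18.gf t π j :=
          Stmt18.Dlem hπa hπs hπsum ht hNt π'' h1.1 h1.2.1 h2' h3 j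
      _ = ∑ k ∈ Finset.range j, Stmt18.coll t π k := (Stmt18.coll_sum t π j).symm
  refine ⟨Stmt18.coll t π, ⟨hpart, heps, hdomc, hmax⟩, ?_⟩
  intro y ⟨hy1, hy2, hy3, hy4⟩
  have hd1 : Dominates N y (Stmt18.coll t π) := hy4 _ hpart heps hdomc
  have hd2 : Dominates N (Stmt18.coll t π) y := hmax y hy1 hy2 hy3
  have hsums : ∀ j, ∑ k ∈ Finset.range j, y k = ∑ k ∈ Finset.range j, Stmt18.coll t π k :=
    fun j => le_antisymm (hd2 j) (hd1 j)
  funext k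
  have ha := hsums k
  have hb := hsums (k+1)
  rw [Finset.sum_range_succ, Finset.sum_range_succ] at hb
  omega
end
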